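/- arXiv:2306.03436 — 3 statements merged into one kernel-verified Lean document; each statement's English description precedes it below -/
import Mathlib

section
/- In the MDP, the posterior q(x_{t-1} | x_t, x_0) is Gaussian with variance σ̃_t = η²(1-ᾱ_{t-1})(1-α_t)/(1-ᾱ_t) and mean μ̃_t(x_t,x_0) = [sqrt(α_t)(1-ᾱ_{t-1})/(1-ᾱ_t)]·x_t + [sqrt(ᾱ_{t-1})(1-α_t)/(1-ᾱ_t)]·x_0 + [(ᾱ_t - α_t)/(1-ᾱ_t)]·φ_t + [(1-α_t)/(1-ᾱ_t)]·φ̃_{t-1}. -/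
open MeasureTheory ProbabilityTheory Real

/-- MDP posterior via Bayes' rule: the product of the forward-kernel density and the
marginal density at `t-1` equals the marginal density at `t` times a Gaussian density
in `x_{t-1}` with variance `σ̃_t = η²(1-ᾱ_{t-1})(1-α_t)/(1-ᾱ_t)` and mean
`μ̃_t = [√α_t(1-ᾱ_{t-1})/(1-ᾱ_t)] x_t + [√ᾱ_{t-1}(1-α_t)/(1-ᾱ_t)] x_0
  + [(ᾱ_t-α_t)/(1-ᾱ_t)] φ_t + [(1-α_t)/(1-ᾱ_t)] φ̃_{t-1}`;
i.e. `q(x_{t-1}|x_t,x_0) = q(x_t|x_{t-1}) q(x_{t-1}|x_0) / q(x_t|x_0)` is this Gaussian. -/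
theorem mdp_posterior_gaussian
    (αt αbar1 αbar : ℝ) (hαt : αt ∈ Set.Ioo (0 : ℝ) 1)
    (hαbar1 : αbar1 ∈ Set.Ioo (0 : ℝ) 1) (hαbar : αbar = αt * αbar1)
    (η : ℝ) (hη : η ∈ Set.Ioo (0 : ℝ) 1)
    (φt φtilde1 φtilde : ℝ) (hφ : φtilde = Real.sqrt αt * (φt + φtilde1))
    (x0 xt xt1 : ℝ) :
    gaussianPDFReal (Real.sqrt αt * (xt1 + φt)) (Real.toNNReal (η ^ 2 * (1 - αt))) xt
        * gaussianPDFReal (Real.sqrt αbar1 * x0 + φtilde1)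
            (Real.toNNReal (η ^ 2 * (1 - αbar1))) xt1
      = gaussianPDFReal (Real.sqrt αbar * x0 + φtilde)
            (Real.toNNReal (η ^ 2 * (1 - αbar))) xt
        * gaussianPDFReal
            (Real.sqrt αt * (1 - αbar1) / (1 - αbar) * xt
              + Real.sqrt αbar1 * (1 - αt) / (1 - αbar) * x0
              + (αbar - αt) / (1 - αbar) * φt
              + (1 - αt) / (1 - αbar) * φtilde1)
            (Real.toNNReal (η ^ 2 * (1 - αbar1) * (1 - αt) / (1 - αbar))) xt1 := by
  obtain ⟨hαt0, hαt1⟩ := hαt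
  obtain ⟨hb0, hb1⟩ := hαbar1
  obtain ⟨hη0, hη1⟩ := hη
  have h1t : (0:ℝ) < 1 - αt := by linarith
  have h1b : (0:ℝ) < 1 - αbar1 := by linarith
  have h1bar : (0:ℝ) < 1 - αbar := by nlinarith
  have hη2 : (0:ℝ) < η ^ 2 := by positivity
  set a := Real.sqrt αt with ha
  set b := Real.sqrt αbar1 with hb
  have ha2 : a ^ 2 = αt := Real.sq_sqrt hαt0.le
  have hb2 : b ^ 2 = αbar1 := Real.sq_sqrt hb0.le
  have ha0 : 0 < a := Real.sqrt_pos.mpr hαt0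
  have hbpos : 0 < b := Real.sqrt_pos.mpr hb0
  have hab : Real.sqrt αbar = a * b := by
    rw [hαbar, Real.sqrt_mul hαt0.le]
  have hv1 : ((η ^ 2 * (1 - αt)).toNNReal : ℝ) = η ^ 2 * (1 - αt) :=
    Real.coe_toNNReal _ (by positivity)
  have hv2 : ((η ^ 2 * (1 - αbar1)).toNNReal : ℝ) = η ^ 2 * (1 - αbar1) :=
    Real.coe_toNNReal _ (by positivity)
  have hv3 : ((η ^ 2 * (1 - αbar)).toNNReal : ℝ) = η ^ 2 * (1 - αbar) :=
    Real.coe_toNNReal _ (by positivity)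
  have hv4 : ((η ^ 2 * (1 - αbar1) * (1 - αt) / (1 - αbar)).toNNReal : ℝ)
      = η ^ 2 * (1 - αbar1) * (1 - αt) / (1 - αbar) :=
    Real.coe_toNNReal _ (by positivity)
  simp only [gaussianPDFReal, hv1, hv2, hv3, hv4, hab, hφ]
  rw [mul_mul_mul_comm, mul_mul_mul_comm (√(2 * π * (η ^ 2 * (1 - αbar))))⁻¹]
  have hπ : (0:ℝ) < π := Real.pi_pos
  have hnorm : (√(2 * π * (η ^ 2 * (1 - αt))))⁻¹ * (√(2 * π * (η ^ 2 * (1 - αbar1))))⁻¹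
      = (√(2 * π * (η ^ 2 * (1 - αbar))))⁻¹
        * (√(2 * π * (η ^ 2 * (1 - αbar1) * (1 - αt) / (1 - αbar))))⁻¹ := by
    rw [← mul_inv, ← mul_inv, ← Real.sqrt_mul (by positivity), ← Real.sqrt_mul (by positivity)]
    congr 2
    field_simp
  rw [hnorm, ← Real.exp_add, ← Real.exp_add]
  congr 1
  subst hαbar
  rw [← ha2, ← hb2]
  have h1t' : (0:ℝ) < 1 - a ^ 2 := by rw [ha2]; exact h1t
  have h1b' : (0:ℝ) < 1 - b ^ 2 := by rw [hb2]; exact h1b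
  have h1bar' : (0:ℝ) < 1 - a ^ 2 * b ^ 2 := by rw [ha2, hb2]; exact h1bar
  rw [Real.exp_eq_exp]
  field_simp
  ring
end

section
/- Substituting x_0 = (1/sqrt(ᾱ_t))·(x_t − φ̃_t − η·sqrt(1-ᾱ_t)·ε_t) into the MDP posterior mean yields μ̃_t = (1/sqrt(α_t))·(x_t − η·(1-α_t)/sqrt(1-ᾱ_t)·ε_t) + C_t, where C_t depends only on t, φ_t, φ̃_{t-1}, φ̃_t, the α's, and η (not on x_t or ε_t). -/
/-- Substituting `x_0 = (1/√ᾱ_t)(x_t − φ̃_t − η√(1-ᾱ_t) ε_t)` into the MDP posterior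
mean yields `μ̃_t = (1/√α_t)(x_t − η(1-α_t)/√(1-ᾱ_t) ε_t) + C_t`, where `C_t` does
not depend on `x_t` or `ε_t`. -/
theorem mdp_posterior_mean_reparam (d : ℕ)
    (αt αbar1 αbar η : ℝ) (hαt : αt ∈ Set.Ioo (0 : ℝ) 1)
    (hαbar1 : αbar1 ∈ Set.Ioo (0 : ℝ) 1) (hαbar : αbar = αt * αbar1)
    (hη : η ∈ Set.Ioo (0 : ℝ) 1)
    (φt φtilde1 φtilde : EuclideanSpace ℝ (Fin d)) :
    ∃ C : EuclideanSpace ℝ (Fin d), ∀ xt εt : EuclideanSpace ℝ (Fin d),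
      (Real.sqrt αt * (1 - αbar1) / (1 - αbar)) • xt
        + (Real.sqrt αbar1 * (1 - αt) / (1 - αbar)) •
            ((1 / Real.sqrt αbar) •
              (xt - φtilde - (η * Real.sqrt (1 - αbar)) • εt))
        + ((αbar - αt) / (1 - αbar)) • φt
        + ((1 - αt) / (1 - αbar)) • φtilde1
      = (1 / Real.sqrt αt) •
          (xt - (η * (1 - αt) / Real.sqrt (1 - αbar)) • εt) + C := by
  obtain ⟨hαt0, hαt1⟩ := hαt
  obtain ⟨hb0, hb1⟩ := hαbar1
  subst hαbar
  have hbar0 : 0 < αt * αbar1 := by positivity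
  have hbar1 : αt * αbar1 < 1 := by nlinarith
  have h1m : 0 < 1 - αt * αbar1 := by linarith
  have hsqt : Real.sqrt αt * Real.sqrt αt = αt := Real.mul_self_sqrt hαt0.le
  have hsqb1 : Real.sqrt αbar1 * Real.sqrt αbar1 = αbar1 := Real.mul_self_sqrt hb0.le
  have hsq : Real.sqrt (1 - αt * αbar1) * Real.sqrt (1 - αt * αbar1)
      = 1 - αt * αbar1 := Real.mul_self_sqrt h1m.le
  have hsbar : Real.sqrt (αt * αbar1) = Real.sqrt αt * Real.sqrt αbar1 :=
    Real.sqrt_mul hαt0.le _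
  have hst : Real.sqrt αt ≠ 0 := ne_of_gt (Real.sqrt_pos.mpr hαt0)
  have hsb1 : Real.sqrt αbar1 ≠ 0 := ne_of_gt (Real.sqrt_pos.mpr hb0)
  have hs1m : Real.sqrt (1 - αt * αbar1) ≠ 0 := ne_of_gt (Real.sqrt_pos.mpr h1m)
  refine ⟨((αt * αbar1 - αt) / (1 - αt * αbar1)) • φt
    + ((1 - αt) / (1 - αt * αbar1)) • φtilde1
    - (Real.sqrt αbar1 * (1 - αt) /
        ((1 - αt * αbar1) * Real.sqrt (αt * αbar1))) • φtilde, ?_⟩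
  intro xt εt
  rw [hsbar]
  -- generalize the square roots
  generalize hS : Real.sqrt αt = s at *
  generalize hB : Real.sqrt αbar1 = b at *
  generalize hU : Real.sqrt (1 - αt * αbar1) = u at *
  -- replace αt, αbar1 by s*s, b*b
  subst hsqt
  subst hsqb1
  have hs2 : 1 - s * s * (b * b) ≠ 0 := by nlinarith
  have hs2' : 1 - b ^ 2 * s ^ 2 ≠ 0 := by nlinarith
  have hne : b * s - b ^ 3 * s ^ 3 ≠ 0 := by
    have h : b * s - b ^ 3 * s ^ 3 = b * s * (1 - b ^ 2 * s ^ 2) := by ring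
    rw [h]
    exact mul_ne_zero (mul_ne_zero hsb1 hst) hs2'
  have hne' : s * b - s ^ 3 * b ^ 3 ≠ 0 := by
    have h : s * b - s ^ 3 * b ^ 3 = b * s - b ^ 3 * s ^ 3 := by ring
    rw [h]; exact hne
  have hA : s * (1 - b * b) / (1 - s * s * (b * b))
      + b * (1 - s * s) / (1 - s * s * (b * b)) * (1 / (s * b)) = 1 / s := by
    field_simp
    rw [div_eq_one_iff_eq (by intro h; nlinarith)]; ring
  have hD : (1 - b ^ 2 * s ^ 2)⁻¹ * b⁻¹ * s⁻¹ = (b * s - b ^ 3 * s ^ 3)⁻¹ := by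
    rw [← mul_inv, ← mul_inv]
    congr 1
    ring
  have hB : b * (1 - s * s) / (1 - s * s * (b * b)) * (1 / (s * b)) * (η * u)
      = (1 / s) * (η * (1 - s * s) / u) := by
    field_simp
    linear_combination ((1 - s ^ 2) * η) * hsq
  match_scalars
  all_goals try ring
  all_goals try linear_combination hA
  all_goals try linear_combination (b * (s ^ 2 - 1)) * hD
  all_goals (field_simp; linear_combination (η * (s ^ 2 - 1)) * hsq)
end

section
/- A WDP with trigger b and factor γ is exactly an MDP with per-step constants φ_t = (1/sqrt(α_t) − 1)·(1-γ)·b and noise scale η = γ. That is, with these choices, the MDP accumulated constant φ̃_t = Σ_{i=1}^{t} sqrt(∏_{j=t+1-i}^{t} α_j)·φ_{t+1-i} equals (1 − sqrt(ᾱ_t))·(1-γ)·b, matching the WDP marginal x̃_t = sqrt(ᾱ_t)·x̃_0 + (1−sqrt(ᾱ_t))(1-γ)·b + γ·sqrt(1-ᾱ_t)·ε. -/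
/-!
With `φ_k = (1/√α_k − 1)(1−γ) b`, the `k`-th term of the accumulated constant is
`(1−γ) b` times `√(∏_{j=k}^t α_j) (1/√α_k − 1) = √(∏_{j=k+1}^t α_j) − √(∏_{j=k}^t α_j)`,
so the sum telescopes to `(1 − √ᾱ_t)(1−γ) b`. The marginal identity is then linear algebra.
-/

open Finset

theorem Finset.sum_Icc_one_reflect {M : Type*} [AddCommMonoid M] (f : ℕ → M) (t : ℕ) :
    ∑ i ∈ Icc 1 t, f (t + 1 - i) = ∑ i ∈ Icc 1 t, f i := by
  simpa only [← Ico_add_one_right_eq_Icc, show t + 1 + 1 - (t + 1) = 1 by omega,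
    Nat.add_sub_cancel] using sum_Ico_reflect f 1 (show t + 1 ≤ t + 1 + 1 by omega)

section Telescoping

variable {α : ℕ → ℝ}

theorem sqrt_prod_Icc_mul_inv_sqrt_sub_one {k t : ℕ} (hk : 0 < α k) (hkt : k ≤ t) :
    √(∏ j ∈ Icc k t, α j) * (1 / √(α k) - 1)
      = √(∏ j ∈ Icc (k + 1) t, α j) - √(∏ j ∈ Icc k t, α j) := by
  have hsplit : ∏ j ∈ Icc k t, α j = α k * ∏ j ∈ Icc (k + 1) t, α j := by
    rw [Icc_add_one_left_eq_Ioc, mul_prod_Ioc_eq_prod_Icc hkt]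
  have hsqrt : √(α k) ≠ 0 := (Real.sqrt_pos.2 hk).ne'
  rw [mul_sub, mul_one, hsplit, Real.sqrt_mul hk.le]
  field_simp

theorem sum_sqrt_prod_Icc_mul_inv_sqrt_sub_one (hα : ∀ j, 0 < α j) (t : ℕ) :
    ∑ k ∈ Icc 1 t, √(∏ j ∈ Icc k t, α j) * (1 / √(α k) - 1)
      = 1 - √(∏ j ∈ Icc 1 t, α j) := by
  rw [sum_congr rfl fun k hk => sqrt_prod_Icc_mul_inv_sqrt_sub_one (hα k) (mem_Icc.1 hk).2,
    ← Ico_add_one_right_eq_Icc,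
    sum_Ico_sub (f := fun k => √(∏ j ∈ Icc k t, α j)) (by omega)]
  simp [Ico_add_one_right_eq_Icc]

end Telescoping

theorem wdp_is_mdp_general (d : ℕ)
    (α : ℕ → ℝ) (hα : ∀ t, α t ∈ Set.Ioo (0 : ℝ) 1)
    (γ : ℝ)
    (b : EuclideanSpace ℝ (Fin d))
    (φ : ℕ → EuclideanSpace ℝ (Fin d))
    (hφ : ∀ t, φ t = ((1 / Real.sqrt (α t) - 1) * (1 - γ)) • b)
    (η : ℝ) (hη : η = γ) :
    (∀ t : ℕ,
        (∑ i ∈ Icc 1 t,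
            Real.sqrt (∏ j ∈ Icc (t + 1 - i) t, α j) • φ (t + 1 - i))
          = ((1 - Real.sqrt (∏ i ∈ Icc 1 t, α i)) * (1 - γ)) • b)
      ∧ ∀ (t : ℕ) (x0 ε xt xtil0 xtil : EuclideanSpace ℝ (Fin d)),
          xt = Real.sqrt (∏ i ∈ Icc 1 t, α i) • x0
              + Real.sqrt (1 - ∏ i ∈ Icc 1 t, α i) • ε →
          xtil0 = γ • x0 + (1 - γ) • b →
          xtil = γ • xt + (1 - γ) • b →
          xtil = Real.sqrt (∏ i ∈ Icc 1 t, α i) • xtil0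
            + ((1 - Real.sqrt (∏ i ∈ Icc 1 t, α i)) * (1 - γ)) • b
            + (η * Real.sqrt (1 - ∏ i ∈ Icc 1 t, α i)) • ε := by
  refine ⟨fun t => ?_, fun t x0 ε xt xtil0 xtil hxt hxtil0 hxtil => ?_⟩
  · rw [sum_Icc_one_reflect (fun k => √(∏ j ∈ Icc k t, α j) • φ k)]
    simp_rw [hφ, smul_smul, ← mul_assoc]
    rw [← sum_smul, ← sum_mul, sum_sqrt_prod_Icc_mul_inv_sqrt_sub_one (fun j => (hα j).1)]
  · subst hxt hxtil0 hxtil hη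
    module

/-- A WDP with trigger `b` and factor `γ` is exactly an MDP with per-step constants
`φ_t = (1/√α_t − 1)(1-γ) b` and noise scale `η = γ`: with these choices the MDP
accumulated constant `φ̃_t = ∑_{i=1}^t √(∏_{j=t+1-i}^t α_j) φ_{t+1-i}` equals
`(1 − √ᾱ_t)(1-γ) b`, matching the WDP marginal
`x̃_t = √ᾱ_t x̃_0 + (1−√ᾱ_t)(1-γ) b + γ√(1-ᾱ_t) ε`. -/
theorem wdp_is_mdp (d : ℕ)
    (α : ℕ → ℝ) (hα : ∀ t, α t ∈ Set.Ioo (0 : ℝ) 1)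
    (γ : ℝ) (hγ : γ ∈ Set.Ioo (0 : ℝ) 1)
    (b : EuclideanSpace ℝ (Fin d))
    (φ : ℕ → EuclideanSpace ℝ (Fin d))
    (hφ : ∀ t, φ t = ((1 / Real.sqrt (α t) - 1) * (1 - γ)) • b)
    (η : ℝ) (hη : η = γ) :
    (∀ t : ℕ,
        (∑ i ∈ Icc 1 t,
            Real.sqrt (∏ j ∈ Icc (t + 1 - i) t, α j) • φ (t + 1 - i))
          = ((1 - Real.sqrt (∏ i ∈ Icc 1 t, α i)) * (1 - γ)) • b)
      ∧ ∀ (t : ℕ) (x0 ε xt xtil0 xtil : EuclideanSpace ℝ (Fin d)),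
          xt = Real.sqrt (∏ i ∈ Icc 1 t, α i) • x0
              + Real.sqrt (1 - ∏ i ∈ Icc 1 t, α i) • ε →
          xtil0 = γ • x0 + (1 - γ) • b →
          xtil = γ • xt + (1 - γ) • b →
          xtil = Real.sqrt (∏ i ∈ Icc 1 t, α i) • xtil0
            + ((1 - Real.sqrt (∏ i ∈ Icc 1 t, α i)) * (1 - γ)) • b
            + (η * Real.sqrt (1 - ∏ i ∈ Icc 1 t, α i)) • ε :=
  wdp_is_mdp_general d α hα γ b φ hφ η hη
end
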